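/- arXiv:1609.03686 — 2 statements merged into one kernel-verified Lean document; each statement's English description precedes it below -/
import Mathlib

section
/- Suppose each of N = 2n points is independently assigned to the treatment group with probability 1/2 (the bootstrap null). Then the between-group nearest-neighbor count D₁₂ = Σ_{i,j} a(i,j)·1[i treated]·1[j control] satisfies E_B(D₁₂) = N/4 and E_B(D₁₂²) = (1/16)(N² + N + 2C₁ + 2C₂). -/
/-!
Encode the labels as signs `σᵢ = ±1`, so that `1[i treated] = (1 + σᵢ) / 2` and
`1[i control] = (1 - σᵢ) / 2`. Then `4 D₁₂ = N + ∑ᵢ (1 - dᵢ) σᵢ - ∑ᵢⱼ a(i,j) σᵢ σⱼ`, where `dᵢ` is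
the in-degree of `i`: a polynomial of degree two in the signs with no diagonal terms. Averaging over
all labelings, `E σᵢσⱼ = [i = j]` and, for `i ≠ j`, `k ≠ l`, `E σₚσᵢσⱼ = 0` and
`E σᵢσⱼσₖσₗ = [{i,j} = {k,l}]`. Hence `E D₁₂ = N/4` and
`16 E D₁₂² = N² + ∑ᵢ (1 - dᵢ)² + ∑ᵢⱼ a(i,j) (a(i,j) + a(j,i))`. Since `a` is `0/1`-valued with
unit row sums, `∑ᵢ dᵢ = ∑ᵢⱼ a(i,j)² = N` and `∑ᵢ dᵢ² = N + 2C₂`, so the last two sums are `2C₂`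
and `N + 2C₁`.
-/

open Finset

noncomputable def spin (b : Bool) : ℝ := if b then 1 else -1

theorem ite_eq_true_eq_one_add_spin (b : Bool) :
    (if b = true then 1 else 0 : ℝ) = (1 + spin b) / 2 := by
  cases b <;> norm_num [spin]

theorem ite_eq_false_eq_one_sub_spin (b : Bool) :
    (if b = false then 1 else 0 : ℝ) = (1 - spin b) / 2 := by
  cases b <;> norm_num [spin]

section Moments

variable {ι : Type*} [Fintype ι] [DecidableEq ι]

theorem sum_prod_spin_pow (c : ι → ℕ) :
    ∑ ε : ι → Bool, ∏ i, spin (ε i) ^ c i = if ∀ i, Even (c i) then 2 ^ Fintype.card ι else 0 := by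
  rw [← Fintype.prod_sum fun i b => spin b ^ c i]
  simp only [Fintype.sum_bool, spin, if_true, one_pow, Bool.false_eq_true, if_false]
  split_ifs with h
  · rw [prod_congr rfl fun i _ => by rw [(h i).neg_one_pow, one_add_one_eq_two], prod_const,
      card_univ]
  · push Not at h
    obtain ⟨i, hi⟩ := h
    exact prod_eq_zero (mem_univ i) (by rw [(Nat.not_even_iff_odd.mp hi).neg_one_pow]; norm_num)

theorem prod_spin_pow_indicator (ε : ι → Bool) (i : ι) :
    ∏ k, spin (ε k) ^ (if k = i then 1 else 0) = spin (ε i) := by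
  simp [pow_ite]

theorem sum_spin (i : ι) : ∑ ε : ι → Bool, spin (ε i) = 0 := by
  simp_rw [← prod_spin_pow_indicator _ i, sum_prod_spin_pow]
  exact if_neg fun h => by simpa using h i

theorem sum_spin_mul_spin (i j : ι) :
    ∑ ε : ι → Bool, spin (ε i) * spin (ε j) = if i = j then 2 ^ Fintype.card ι else 0 := by
  simp_rw [← prod_spin_pow_indicator _ i, ← prod_spin_pow_indicator _ j, ← prod_mul_distrib,
    ← pow_add, sum_prod_spin_pow]
  refine if_congr ⟨fun h => ?_, fun h k => ?_⟩ rfl rfl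
  · by_contra hij; simpa [hij] using h i
  · subst h; split_ifs <;> simp

theorem sum_spin_mul_spin_mul_spin (p : ι) {i j : ι} (hij : i ≠ j) :
    ∑ ε : ι → Bool, spin (ε p) * (spin (ε i) * spin (ε j)) = 0 := by
  simp_rw [← prod_spin_pow_indicator _ p, ← prod_spin_pow_indicator _ i,
    ← prod_spin_pow_indicator _ j, ← prod_mul_distrib, ← pow_add, sum_prod_spin_pow]
  refine if_neg fun h => ?_
  by_cases hpi : p = i
  · subst hpi; simpa [hij.symm] using h j
  · simpa [Ne.symm hpi, hij] using h i

theorem sum_spin_mul_spin_mul_spin_mul_spin {i j k l : ι} (hij : i ≠ j) (hkl : k ≠ l) :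
    ∑ ε : ι → Bool, (spin (ε i) * spin (ε j)) * (spin (ε k) * spin (ε l)) =
      if (i = k ∧ j = l) ∨ (i = l ∧ j = k) then 2 ^ Fintype.card ι else 0 := by
  simp_rw [← prod_spin_pow_indicator _ i, ← prod_spin_pow_indicator _ j,
    ← prod_spin_pow_indicator _ k, ← prod_spin_pow_indicator _ l, ← prod_mul_distrib, ← pow_add,
    sum_prod_spin_pow]
  refine if_congr ⟨fun h => ?_, ?_⟩ rfl rfl
  · have hi := h i
    have hj := h j
    rw [Nat.even_iff] at hi hj
    by_cases hik : i = k <;> by_cases hil : i = l <;> by_cases hjk : j = k <;>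
      by_cases hjl : j = l <;> simp_all
  · rintro (⟨rfl, rfl⟩ | ⟨rfl, rfl⟩) p <;> by_cases hpi : p = i <;> by_cases hpj : p = j <;>
      simp_all [Nat.even_iff]

end Moments

section Chaos

variable {ι : Type*} [Fintype ι] [DecidableEq ι]

noncomputable def linearChaos (w : ι → ℝ) (ε : ι → Bool) : ℝ := ∑ i, w i * spin (ε i)

noncomputable def quadraticChaos (b : ι → ι → ℝ) (ε : ι → Bool) : ℝ :=
  ∑ i, ∑ j, b i j * (spin (ε i) * spin (ε j))

theorem sum_linearChaos (w : ι → ℝ) : ∑ ε, linearChaos w ε = 0 := by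
  simp [linearChaos, sum_comm (γ := ι → Bool), ← mul_sum, sum_spin]

theorem sum_quadraticChaos {b : ι → ι → ℝ} (hb : ∀ i, b i i = 0) :
    ∑ ε, quadraticChaos b ε = 0 := by
  simp [quadraticChaos, sum_comm (γ := ι → Bool), ← mul_sum, sum_spin_mul_spin, hb]

theorem sum_linearChaos_sq (w : ι → ℝ) :
    ∑ ε, linearChaos w ε ^ 2 = 2 ^ Fintype.card ι * ∑ i, w i ^ 2 := by
  simp only [linearChaos, sq, sum_mul, mul_sum, mul_mul_mul_comm (w _)]
  simp only [sum_comm (γ := ι → Bool), ← mul_sum, sum_spin_mul_spin]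
  simp [mul_sum, mul_comm]

theorem sum_linearChaos_mul_quadraticChaos (w : ι → ℝ) {b : ι → ι → ℝ} (hb : ∀ i, b i i = 0) :
    ∑ ε, linearChaos w ε * quadraticChaos b ε = 0 := by
  simp only [linearChaos, quadraticChaos, sum_mul, mul_sum, mul_mul_mul_comm (w _)]
  simp only [sum_comm (γ := ι → Bool), ← mul_sum]
  refine sum_eq_zero fun i _ => sum_eq_zero fun j _ => sum_eq_zero fun p _ => ?_
  rcases eq_or_ne i j with rfl | hij
  · simp [hb]
  · simp [sum_spin_mul_spin_mul_spin p hij]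

theorem sum_quadraticChaos_sq {b : ι → ι → ℝ} (hb : ∀ i, b i i = 0) :
    ∑ ε, quadraticChaos b ε ^ 2 = 2 ^ Fintype.card ι * ∑ i, ∑ j, b i j * (b i j + b j i) := by
  have key : ∀ i j k l, b i j * b k l *
      ∑ ε : ι → Bool, (spin (ε i) * spin (ε j)) * (spin (ε k) * spin (ε l)) =
      2 ^ Fintype.card ι * ((if k = i ∧ l = j then b k l * b k l else 0) +
        (if k = j ∧ l = i then b k l * b l k else 0)) := by
    intro i j k l
    rcases eq_or_ne i j with rfl | hij
    · grind
    rcases eq_or_ne k l with rfl | hkl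
    · grind
    rw [sum_spin_mul_spin_mul_spin_mul_spin hij hkl]
    grind
  simp only [quadraticChaos, sq, sum_mul, mul_sum, mul_mul_mul_comm (b _ _)]
  simp only [sum_comm (γ := ι → Bool), ← mul_sum, key]
  simp [mul_add, ite_and, sum_add_distrib]

theorem sum_sq_const_add_linearChaos_sub_quadraticChaos (c : ℝ) (w : ι → ℝ) {b : ι → ι → ℝ}
    (hb : ∀ i, b i i = 0) :
    ∑ ε, (c + linearChaos w ε - quadraticChaos b ε) ^ 2 =
      2 ^ Fintype.card ι * (c ^ 2 + ∑ i, w i ^ 2 + ∑ i, ∑ j, b i j * (b i j + b j i)) := by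
  have expand : ∀ ε, (c + linearChaos w ε - quadraticChaos b ε) ^ 2 =
      c ^ 2 + linearChaos w ε ^ 2 + quadraticChaos b ε ^ 2 + 2 * c * linearChaos w ε -
        2 * c * quadraticChaos b ε - 2 * (linearChaos w ε * quadraticChaos b ε) := fun ε => by ring
  simp only [expand, sum_add_distrib, sum_sub_distrib, ← mul_sum, sum_const, card_univ,
    Fintype.card_fun, Fintype.card_bool, sum_linearChaos, sum_quadraticChaos hb,
    sum_linearChaos_sq, sum_quadraticChaos_sq hb, sum_linearChaos_mul_quadraticChaos w hb]
  ring

end Chaos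

section CrossCount

variable {ι : Type*} [Fintype ι]

noncomputable def crossCount (a : ι → ι → ℝ) (ε : ι → Bool) : ℝ :=
  ∑ i, ∑ j, a i j * (if ε i = true then 1 else 0) * (if ε j = false then 1 else 0)

theorem crossCount_eq (a : ι → ι → ℝ) (ε : ι → Bool) :
    crossCount a ε = (∑ i, ∑ j, a i j +
      linearChaos (fun i => ∑ j, a i j - ∑ j, a j i) ε - quadraticChaos a ε) / 4 := by
  simp only [crossCount, linearChaos, quadraticChaos, ite_eq_true_eq_one_add_spin,
    ite_eq_false_eq_one_sub_spin, sub_mul, sum_mul, sum_sub_distrib]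
  rw [sum_comm (f := fun i j => a j i * spin (ε i))]
  simp only [← sum_sub_distrib, ← sum_add_distrib, sum_div]
  exact sum_congr rfl fun i _ => sum_congr rfl fun j _ => by ring

variable [DecidableEq ι]

theorem sum_crossCount {a : ι → ι → ℝ} (ha : ∀ i, a i i = 0) :
    ∑ ε, crossCount a ε = 2 ^ Fintype.card ι * (∑ i, ∑ j, a i j) / 4 := by
  simp only [crossCount_eq, ← sum_div, sum_sub_distrib, sum_add_distrib, sum_linearChaos,
    sum_quadraticChaos ha, sum_const, card_univ, Fintype.card_fun, Fintype.card_bool, nsmul_eq_mul]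
  push_cast
  ring

theorem sum_crossCount_sq {a : ι → ι → ℝ} (ha : ∀ i, a i i = 0) :
    ∑ ε, crossCount a ε ^ 2 = 2 ^ Fintype.card ι / 16 * ((∑ i, ∑ j, a i j) ^ 2 +
      ∑ i, (∑ j, a i j - ∑ j, a j i) ^ 2 + ∑ i, ∑ j, a i j * (a i j + a j i)) := by
  simp only [crossCount_eq, div_pow, ← sum_div,
    sum_sq_const_add_linearChaos_sub_quadraticChaos _ _ ha]
  ring

theorem sum_sq_sum_eq_sum_sq_add_sum_ne (a : ι → ι → ℝ) :
    ∑ j, (∑ i, a i j) ^ 2 =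
      ∑ i, ∑ j, a i j ^ 2 + ∑ i, ∑ l, ∑ j, if i ≠ l then a i j * a l j else 0 := by
  have split : ∀ i l j, a i j * a l j =
      (if i = l then a i j ^ 2 else 0) + (if i ≠ l then a i j * a l j else 0) := by
    intro i l j
    rcases eq_or_ne i l with rfl | h <;> simp [sq, *]
  calc ∑ j, (∑ i, a i j) ^ 2 = ∑ i, ∑ l, ∑ j, a i j * a l j := by
        simp only [sq, sum_mul_sum]
        rw [sum_comm]
        exact sum_congr rfl fun i _ => sum_comm
    _ = ∑ i, ∑ l, ∑ j, ((if i = l then a i j ^ 2 else 0) +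
          (if i ≠ l then a i j * a l j else 0)) :=
        Fintype.sum_congr _ _ fun i => Fintype.sum_congr _ _ fun l =>
          Fintype.sum_congr _ _ (split i l)
    _ = _ := by simp [sum_add_distrib]

theorem sum_sq_rowSum_sub_colSum {a : ι → ι → ℝ} (hrow : ∀ i, ∑ j, a i j = 1)
    (hsq : ∀ i j, a i j ^ 2 = a i j) :
    ∑ i, (∑ j, a i j - ∑ j, a j i) ^ 2 = ∑ i, ∑ l, ∑ j, if i ≠ l then a i j * a l j else 0 := by
  have expand : ∀ i, (1 - ∑ j, a j i) ^ 2 = 1 - 2 * ∑ j, a j i + (∑ j, a j i) ^ 2 :=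
    fun i => by ring
  simp only [hrow, expand, sum_add_distrib, sum_sub_distrib, ← mul_sum,
    sum_sq_sum_eq_sum_sq_add_sum_ne, hsq]
  rw [sum_comm]
  simp only [hrow]
  ring

end CrossCount

theorem stmt9_general (n : ℕ) (a : Fin (2 * n) → Fin (2 * n) → ℕ)
    (ha01 : ∀ i j, a i j ≤ 1) (hdiag : ∀ i, a i i = 0)
    (hrow : ∀ i, ∑ j, a i j = 1)
    (D : (Fin (2 * n) → Bool) → ℝ)
    (hD : ∀ ε, D ε = ∑ i, ∑ j, (a i j : ℝ) *
      (if ε i = true then 1 else 0) * (if ε j = false then 1 else 0))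
    (N twoC1 twoC2 : ℝ)
    (hN : N = (2 * n : ℕ))
    (hC1 : twoC1 = ∑ i, ∑ j, (a i j : ℝ) * (a j i : ℝ))
    (hC2 : twoC2 = ∑ i, ∑ l, ∑ j, if i ≠ l then (a i j : ℝ) * (a l j : ℝ) else 0) :
    (∑ ε : Fin (2 * n) → Bool, D ε) /
        (Fintype.card (Fin (2 * n) → Bool) : ℝ) = N / 4 ∧
    (∑ ε : Fin (2 * n) → Bool, (D ε) ^ 2) /
        (Fintype.card (Fin (2 * n) → Bool) : ℝ) =
      (1 / 16) * (N ^ 2 + N + twoC1 + twoC2) := by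
  set A : Fin (2 * n) → Fin (2 * n) → ℝ := fun i j => a i j
  have hDA : D = crossCount A := funext hD
  have hA0 : ∀ i, A i i = 0 := fun i => by simp [A, hdiag]
  have hArow : ∀ i, ∑ j, A i j = 1 := fun i => by simp only [A]; exact_mod_cast hrow i
  have hAsq : ∀ i j, A i j ^ 2 = A i j := fun i j => by
    rcases Nat.le_one_iff_eq_zero_or_eq_one.mp (ha01 i j) with h | h <;> simp [A, h]
  have hsum : ∑ i, ∑ j, A i j = N := by simp [hArow, hN]
  have hcol : ∑ i, (∑ j, A i j - ∑ j, A j i) ^ 2 = twoC2 :=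
    (sum_sq_rowSum_sub_colSum hArow hAsq).trans hC2.symm
  have hquad : ∑ i, ∑ j, A i j * (A i j + A j i) = N + twoC1 := by
    simp only [mul_add, sum_add_distrib, ← sq, hAsq, hsum, hC1, A]
  have hcard : (Fintype.card (Fin (2 * n) → Bool) : ℝ) = 2 ^ Fintype.card (Fin (2 * n)) := by
    simp
  rw [hDA, hcard, sum_crossCount hA0, sum_crossCount_sq hA0, hsum, hcol, hquad]
  constructor
  · field_simp
  · field_simp
    ring

theorem stmt9 (n : ℕ) (hn : 1 ≤ n) (a : Fin (2 * n) → Fin (2 * n) → ℕ)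
    (ha01 : ∀ i j, a i j ≤ 1) (hdiag : ∀ i, a i i = 0)
    (hrow : ∀ i, ∑ j, a i j = 1)
    (D : (Fin (2 * n) → Bool) → ℝ)
    (hD : ∀ ε, D ε = ∑ i, ∑ j, (a i j : ℝ) *
      (if ε i = true then 1 else 0) * (if ε j = false then 1 else 0))
    (N twoC1 twoC2 : ℝ)
    (hN : N = (2 * n : ℕ))
    (hC1 : twoC1 = ∑ i, ∑ j, (a i j : ℝ) * (a j i : ℝ))
    (hC2 : twoC2 = ∑ i, ∑ l, ∑ j, if i ≠ l then (a i j : ℝ) * (a l j : ℝ) else 0) :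
    (∑ ε : Fin (2 * n) → Bool, D ε) /
        (Fintype.card (Fin (2 * n) → Bool) : ℝ) = N / 4 ∧
    (∑ ε : Fin (2 * n) → Bool, (D ε) ^ 2) /
        (Fintype.card (Fin (2 * n) → Bool) : ℝ) =
      (1 / 16) * (N ^ 2 + N + twoC1 + twoC2) :=
  stmt9_general n a ha01 hdiag hrow D hD N twoC1 twoC2 hN hC1 hC2
end

section
/- Let G be a spanning tree on N = 2n vertices with C₃ pairs of edges sharing a common node. Under the uniform random permutation labeling, the within-treated edge count R₁ and within-control edge count R₂ satisfy Cov(R₁, R₂) = ((N−2)/(16(N−3)))·( 3(N−2) − 2C₃·N/(N−1) ). -/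
/-!
`2 R₁` and `2 R₂` count the ordered adjacent pairs whose two labels both lie in the treated set
`s`, resp. in `sᶜ`. As `Perm α` acts transitively on injective `k`-tuples, the number of
permutations sending a fixed injective tuple to a prescribed pattern is `|Perm α| / N(N-1)⋯(N-k+1)`
times the number of injective tuples with that pattern. So an edge lands inside `s` for a fraction
`n(n-1)/(N(N-1))` of the permutations, and two vertex-disjoint edges land inside `s` and `sᶜ`
respectively for a fraction `(n(n-1))²/(N(N-1)(N-2)(N-3))`, while edges sharing a vertex never do.
A graph with `m` edges has `4m² + 4m - 4 ∑ deg²` ordered pairs of vertex-disjoint darts; for a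
tree, `m = N - 1` and `∑ deg² = 2 C₃ + 2m`.
-/

open Finset MulAction Equiv

theorem MulAction.card_mul_card_filter_smul {G X : Type*} [Group G] [Fintype G] [MulAction G X]
    [IsPretransitive G X] [Fintype X] (P : X → Prop) [DecidablePred P] (x : X) :
    Fintype.card X * #{g : G | P (g • x)} = Fintype.card G * #{y : X | P y} := by
  classical
  have orbit_const : ∀ y : X, #{g : G | P (g • y)} = #{g : G | P (g • x)} := by
    intro y
    obtain ⟨τ, rfl⟩ := exists_smul_eq G x y
    simp_rw [smul_smul]
    exact card_equiv (Equiv.mulRight τ) (by simp)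
  have translate : ∀ g : G, #{y : X | P (g • y)} = #{y : X | P y} := fun g =>
    card_equiv (MulAction.toPerm g) (by simp)
  calc Fintype.card X * #{g : G | P (g • x)}
      = ∑ y : X, #{g : G | P (g • y)} := by simp [orbit_const]
    _ = ∑ g : G, #{y : X | P (g • y)} := by simp only [card_filter]; exact sum_comm
    _ = Fintype.card G * #{y : X | P y} := by simp [translate]

theorem Nat.cast_descFactorial_four {S : Type*} [CommRing S] (a : ℕ) :
    (a.descFactorial 4 : S) = a * (a - 1) * (a - 2) * (a - 3) := by
  rw [← descPochhammer_eval_eq_descFactorial]; simp [descPochhammer_succ_eval]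

theorem Finset.natCast_card_offDiag {α S : Type*} [DecidableEq α] [Ring S] (s : Finset α) :
    (#s.offDiag : S) = #s * (#s - 1) := by
  rw [offDiag_card, Nat.cast_sub (Nat.le_mul_self _), Nat.cast_mul, mul_sub, mul_one]

theorem Finset.sum_compl_pair {α R : Type*} [Fintype α] [DecidableEq α] [AddCommGroup R]
    {i j : α} (hij : i ≠ j) (f : α → R) :
    ∑ k ∈ {i, j}ᶜ, f k = ∑ k, f k - f i - f j := by
  rw [← sum_compl_add_sum {i, j} f, sum_pair hij]; abel

section Embeddings
variable {α : Type*} [Fintype α] [DecidableEq α] (s t : Finset α)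

theorem card_filter_embedding_fin_two :
    #{h : Fin 2 ↪ α | h 0 ∈ s ∧ h 1 ∈ s} = #s.offDiag := by
  refine card_nbij (fun h => (h 0, h 1)) (fun h hh => by simp_all) ?_ ?_
  · intro h _ h' _ hh
    ext i; fin_cases i <;> simp_all
  · rintro ⟨a, b⟩ hab
    simp only [coe_offDiag, Set.mem_offDiag, mem_coe] at hab
    obtain ⟨ha, hb, hab⟩ := hab
    have hinj : Function.Injective ![a, b] := by
      simp [Function.Injective, Fin.forall_fin_two, hab, Ne.symm hab]
    exact ⟨⟨![a, b], hinj⟩, by simp [ha, hb], rfl⟩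

theorem card_filter_embedding_fin_four (hst : Disjoint s t) :
    #{h : Fin 4 ↪ α | h 0 ∈ s ∧ h 1 ∈ s ∧ h 2 ∈ t ∧ h 3 ∈ t} = #s.offDiag * #t.offDiag := by
  rw [← card_product]
  refine card_nbij (fun h => ((h 0, h 1), (h 2, h 3))) (fun h hh => by simp_all) ?_ ?_
  · intro h _ h' _ hh
    ext i; fin_cases i <;> simp_all
  · rintro ⟨⟨a, b⟩, ⟨c, d⟩⟩ habcd
    simp only [coe_product, coe_offDiag, Set.mem_prod, Set.mem_offDiag, mem_coe] at habcd
    obtain ⟨⟨ha, hb, hab⟩, ⟨hc, hd, hcd⟩⟩ := habcd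
    have hne : ∀ {x y}, x ∈ s → y ∈ t → x ≠ y := fun hx hy hxy =>
      disjoint_left.1 hst hx (hxy ▸ hy)
    have := hne ha hc; have := hne ha hd; have := hne hb hc; have := hne hb hd
    have hinj : Function.Injective ![a, b, c, d] := by
      intro i j
      fin_cases i <;> fin_cases j <;> simp_all [eq_comm]
    exact ⟨⟨![a, b, c, d], hinj⟩, by simp [ha, hb, hc, hd], rfl⟩

end Embeddings

section Permutations
variable {α : Type*} [Fintype α] [DecidableEq α] (s t : Finset α)

theorem descFactorial_two_mul_card_perm_apply_mem {a b : α} (hab : a ≠ b) :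
    (Fintype.card α).descFactorial 2 * #{σ : Perm α | σ a ∈ s ∧ σ b ∈ s} =
      Fintype.card (Perm α) * #s.offDiag := by
  have : IsPretransitive (Perm α) (Fin 2 ↪ α) := Perm.isMultiplyPretransitive α 2
  have hinj : Function.Injective ![a, b] := by
    simp [Function.Injective, Fin.forall_fin_two, hab, Ne.symm hab]
  simpa [Function.Embedding.smul_apply, Fintype.card_embedding_eq,
    card_filter_embedding_fin_two] using
    card_mul_card_filter_smul (G := Perm α) (fun h : Fin 2 ↪ α => h 0 ∈ s ∧ h 1 ∈ s) ⟨_, hinj⟩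

theorem descFactorial_four_mul_card_perm_apply_mem (hst : Disjoint s t) (x : Fin 4 ↪ α) :
    (Fintype.card α).descFactorial 4 *
        #{σ : Perm α | σ (x 0) ∈ s ∧ σ (x 1) ∈ s ∧ σ (x 2) ∈ t ∧ σ (x 3) ∈ t} =
      Fintype.card (Perm α) * (#s.offDiag * #t.offDiag) := by
  have : IsPretransitive (Perm α) (Fin 4 ↪ α) := Perm.isMultiplyPretransitive α 4
  have key := card_mul_card_filter_smul (G := Perm α)
    (fun h : Fin 4 ↪ α => h 0 ∈ s ∧ h 1 ∈ s ∧ h 2 ∈ t ∧ h 3 ∈ t) x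
  rw [Fintype.card_embedding_eq, Fintype.card_fin, card_filter_embedding_fin_four s t hst] at key
  rw [← key]
  congr 2

theorem descFactorial_four_mul_card_perm_apply_mem_of_ne (hst : Disjoint s t) {i j k l : α}
    (hij : i ≠ j) (hkl : k ≠ l) :
    (Fintype.card α).descFactorial 4 * #{σ : Perm α | σ i ∈ s ∧ σ j ∈ s ∧ σ k ∈ t ∧ σ l ∈ t} =
      if k ∉ ({i, j} : Finset α) ∧ l ∉ ({i, j} : Finset α) then
        Fintype.card (Perm α) * (#s.offDiag * #t.offDiag) else 0 := by
  split_ifs with hdistinct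
  · have hinj : Function.Injective ![i, j, k, l] := by
      simp only [mem_insert, mem_singleton, not_or] at hdistinct
      intro a b
      fin_cases a <;> fin_cases b <;> simp_all [eq_comm]
    exact descFactorial_four_mul_card_perm_apply_mem s t hst ⟨_, hinj⟩
  · have hempty : ∀ σ : Perm α, ¬(σ i ∈ s ∧ σ j ∈ s ∧ σ k ∈ t ∧ σ l ∈ t) := by
      rintro σ ⟨hi, hj, hk, hl⟩
      simp only [mem_insert, mem_singleton, not_and_or, not_not] at hdistinct
      rcases hdistinct with (rfl | rfl) | (rfl | rfl) <;>
        exact disjoint_left.1 hst (by assumption) (by assumption)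
    simp [hempty]

end Permutations

namespace SimpleGraph
variable {α R : Type*} [Fintype α] (G : SimpleGraph α) [DecidableRel G.Adj]

theorem sum_ite_adj_right [AddCommMonoidWithOne R] (i : α) :
    ∑ j, (if G.Adj i j then 1 else 0 : R) = G.degree i := by
  rw [sum_boole, ← neighborFinset_eq_filter, card_neighborFinset_eq_degree]

theorem sum_ite_adj_left [AddCommMonoidWithOne R] (j : α) :
    ∑ i, (if G.Adj i j then 1 else 0 : R) = G.degree j := by
  simp_rw [G.adj_comm _ j]; exact G.sum_ite_adj_right j

theorem sum_ite_adj_add [CommSemiring R] (f g : α → R) :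
    ∑ i, ∑ j, (if G.Adj i j then f i + g j else 0) = ∑ v, G.degree v * (f v + g v) := by
  have hf : ∑ i, ∑ j, (if G.Adj i j then f i else 0) = ∑ v, G.degree v * f v := by
    simp_rw [← G.sum_ite_adj_right (R := R), sum_mul, ite_mul, one_mul, zero_mul]
  have hg : ∑ i, ∑ j, (if G.Adj i j then g j else 0) = ∑ v, G.degree v * g v := by
    rw [sum_comm]
    simp_rw [← G.sum_ite_adj_left (R := R), sum_mul, ite_mul, one_mul, zero_mul]
  simp_rw [mul_add, sum_add_distrib, ← hf, ← hg, ← sum_add_distrib, ite_add_ite, add_zero]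

theorem natCast_sum_degree [Semiring R] : ∑ v, (G.degree v : R) = 2 * #G.edgeFinset := by
  rw [← Nat.cast_sum, sum_degrees_eq_twice_card_edges, Nat.cast_mul, Nat.cast_ofNat]

theorem sum_degree_sq [Field R] [NeZero (2 : R)] :
    ∑ v, (G.degree v : R) ^ 2 = 2 * ∑ v, ((G.degree v).choose 2 : R) + 2 * #G.edgeFinset := by
  simp_rw [← natCast_sum_degree, Nat.cast_choose_two, mul_sum, ← sum_add_distrib]
  congr 1; ext v; field_simp; ring

theorem IsTree.natCast_card_edgeFinset [Ring R] (hG : G.IsTree) :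
    (#G.edgeFinset : R) = Fintype.card α - 1 := by
  rw [← hG.card_edgeFinset, Nat.cast_add, Nat.cast_one, add_sub_cancel_right]

variable [DecidableEq α] [CommRing R]

theorem sum_ite_adj_adj_not_mem :
    ∑ i, ∑ j, ∑ k, ∑ l,
      (if G.Adj i j ∧ G.Adj k l ∧ k ∉ ({i, j} : Finset α) ∧ l ∉ ({i, j} : Finset α)
        then 1 else 0 : R) =
      4 * (#G.edgeFinset : R) ^ 2 + 4 * #G.edgeFinset - 4 * ∑ v, (G.degree v : R) ^ 2 := by
  have darts_avoiding : ∀ i j, G.Adj i j →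
      ∑ k, ∑ l, (if G.Adj k l ∧ k ∉ ({i, j} : Finset α) ∧ l ∉ ({i, j} : Finset α)
        then 1 else 0 : R) = 2 * #G.edgeFinset - 2 * G.degree i - 2 * G.degree j + 2 := by
    intro i j hij
    have indicator_split : ∀ k l, (if G.Adj k l ∧ k ∉ ({i, j} : Finset α) ∧ l ∉ ({i, j} : Finset α)
        then 1 else 0 : R) = if k ∈ ({i, j} : Finset α)ᶜ then
          (if l ∈ ({i, j} : Finset α)ᶜ then (if G.Adj k l then 1 else 0) else 0) else 0 := by
      intro k l
      simp only [mem_compl]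
      split_ifs <;> tauto
    simp_rw [indicator_split, sum_ite_irrel, sum_const_zero, sum_ite_mem, univ_inter,
      sum_compl_pair (G.ne_of_adj hij), sum_ite_adj_right, sum_sub_distrib, sum_ite_adj_left,
      natCast_sum_degree]
    simp only [hij, hij.symm, G.irrefl, if_true, if_false]
    ring
  calc _ = ∑ i, ∑ j, (if G.Adj i j then
          (2 * #G.edgeFinset + 2 - 2 * G.degree i) + (-2 * G.degree j) else 0 : R) := by
        refine sum_congr rfl fun i _ => sum_congr rfl fun j _ => ?_
        split_ifs with hij
        · simp only [hij, true_and, darts_avoiding i j hij]; ring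
        · simp [hij]
    _ = _ := by
        have expand : ∀ v, (G.degree v : R) * ((2 * #G.edgeFinset + 2 - 2 * G.degree v) +
            (-2 * G.degree v)) =
              (2 * #G.edgeFinset + 2) * G.degree v - 4 * (G.degree v : R) ^ 2 := by
          intro v; ring
        rw [sum_ite_adj_add]
        simp_rw [expand, sum_sub_distrib, ← mul_sum, natCast_sum_degree]
        ring

variable (s t : Finset α)

theorem card_mul_sum_perm_sum_ite_adj_mem :
    (Fintype.card α : R) * (Fintype.card α - 1) *
        ∑ σ : Perm α, ∑ i, ∑ j, (if G.Adj i j ∧ σ i ∈ s ∧ σ j ∈ s then 1 else 0 : R) =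
      Fintype.card (Perm α) * (#s * (#s - 1)) * (2 * #G.edgeFinset) := by
  rw [← Nat.cast_descFactorial_two, ← natCast_card_offDiag]
  calc _ = ∑ i, ∑ j, (if G.Adj i j then
          ((Fintype.card α).descFactorial 2 * #{σ : Perm α | σ i ∈ s ∧ σ j ∈ s} : ℕ)
          else 0 : R) := by
        simp_rw [sum_comm (γ := Perm α), mul_sum (s := (univ : Finset α))]
        refine sum_congr rfl fun i _ => sum_congr rfl fun j _ => ?_
        split_ifs with hij <;> simp [hij, sum_boole]
    _ = ∑ i, ∑ j, ((Fintype.card (Perm α) * #s.offDiag : ℕ) *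
          if G.Adj i j then 1 else 0 : R) := by
        refine sum_congr rfl fun i _ => sum_congr rfl fun j _ => ?_
        split_ifs with hij
        · rw [descFactorial_two_mul_card_perm_apply_mem s (G.ne_of_adj hij), mul_one]
        · rw [mul_zero]
    _ = _ := by
        simp_rw [← mul_sum, G.sum_ite_adj_right, G.natCast_sum_degree]
        push_cast; ring

theorem card_mul_sum_perm_mul_sum_ite_adj_mem (hst : Disjoint s t) :
    (Fintype.card α : R) * (Fintype.card α - 1) * (Fintype.card α - 2) * (Fintype.card α - 3) *
        ∑ σ : Perm α, (∑ i, ∑ j, (if G.Adj i j ∧ σ i ∈ s ∧ σ j ∈ s then 1 else 0 : R)) *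
          (∑ k, ∑ l, (if G.Adj k l ∧ σ k ∈ t ∧ σ l ∈ t then 1 else 0 : R)) =
      Fintype.card (Perm α) * (#s * (#s - 1)) * (#t * (#t - 1)) *
        (4 * (#G.edgeFinset : R) ^ 2 + 4 * #G.edgeFinset - 4 * ∑ v, (G.degree v : R) ^ 2) := by
  rw [← Nat.cast_descFactorial_four, ← natCast_card_offDiag, ← natCast_card_offDiag]
  calc _ = ∑ i, ∑ j, ∑ k, ∑ l, (if G.Adj i j ∧ G.Adj k l then
          ((Fintype.card α).descFactorial 4 *
            #{σ : Perm α | σ i ∈ s ∧ σ j ∈ s ∧ σ k ∈ t ∧ σ l ∈ t} : ℕ) else 0 : R) := by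
        simp_rw [sum_mul, mul_sum, sum_comm (γ := Perm α)]
        refine sum_congr rfl fun i _ => sum_congr rfl fun j _ =>
          sum_congr rfl fun k _ => sum_congr rfl fun l _ => ?_
        rw [← mul_sum]
        simp_rw [ite_zero_mul_ite_zero, mul_one, and_and_and_comm]
        split_ifs with hadj
        · simp only [hadj, true_and, sum_boole, and_assoc, Nat.cast_mul]
        · simp only [hadj, false_and, if_false, sum_const_zero, mul_zero]
    _ = ∑ i, ∑ j, ∑ k, ∑ l, ((Fintype.card (Perm α) * (#s.offDiag * #t.offDiag) : ℕ) *
          if G.Adj i j ∧ G.Adj k l ∧ k ∉ ({i, j} : Finset α) ∧ l ∉ ({i, j} : Finset α)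
          then 1 else 0 : R) := by
        refine sum_congr rfl fun i _ => sum_congr rfl fun j _ =>
          sum_congr rfl fun k _ => sum_congr rfl fun l _ => ?_
        by_cases hadj : G.Adj i j ∧ G.Adj k l
        · rw [descFactorial_four_mul_card_perm_apply_mem_of_ne s t hst (G.ne_of_adj hadj.1)
            (G.ne_of_adj hadj.2)]
          simp [hadj]
        · rw [if_neg hadj, if_neg fun h => hadj ⟨h.1, h.2.1⟩, mul_zero]
    _ = _ := by
        simp_rw [← mul_sum, G.sum_ite_adj_adj_not_mem]
        push_cast; ring

end SimpleGraph

theorem stmt16 (n : ℕ) (hn : 3 ≤ n) (G : SimpleGraph (Fin (2 * n)))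
    [DecidableRel G.Adj] (hG : G.IsTree)
    (R1 R2 : Equiv.Perm (Fin (2 * n)) → ℝ)
    (hR1 : ∀ σ, R1 σ = (∑ i, ∑ j,
      if G.Adj i j ∧ (σ i : ℕ) < n ∧ (σ j : ℕ) < n then (1 : ℝ) else 0) / 2)
    (hR2 : ∀ σ, R2 σ = (∑ i, ∑ j,
      if G.Adj i j ∧ n ≤ (σ i : ℕ) ∧ n ≤ (σ j : ℕ) then (1 : ℝ) else 0) / 2)
    (N C3 : ℝ) (hN : N = (2 * n : ℕ))
    (hC3 : C3 = ∑ v, ((G.degree v).choose 2 : ℝ)) :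
    (∑ σ : Equiv.Perm (Fin (2 * n)), R1 σ * R2 σ) /
        (Fintype.card (Equiv.Perm (Fin (2 * n))) : ℝ) -
      ((∑ σ : Equiv.Perm (Fin (2 * n)), R1 σ) /
          (Fintype.card (Equiv.Perm (Fin (2 * n))) : ℝ)) *
        ((∑ σ : Equiv.Perm (Fin (2 * n)), R2 σ) /
          (Fintype.card (Equiv.Perm (Fin (2 * n))) : ℝ)) =
    ((N - 2) / (16 * (N - 3))) * (3 * (N - 2) - 2 * C3 * (N / (N - 1))) := by
  set s : Finset (Fin (2 * n)) := {v | (v : ℕ) < n}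
  have hs : #s = n := by simp [s, Fin.card_filter_val_lt]; omega
  have hsc : #sᶜ = n := by rw [card_compl, hs, Fintype.card_fin]; omega
  have h_s := G.card_mul_sum_perm_sum_ite_adj_mem (R := ℝ) s
  have h_sc := G.card_mul_sum_perm_sum_ite_adj_mem (R := ℝ) sᶜ
  have h_mixed := G.card_mul_sum_perm_mul_sum_ite_adj_mem (R := ℝ) s sᶜ disjoint_compl_right
  simp only [G.sum_degree_sq, ← hC3, hG.natCast_card_edgeFinset, hs, hsc, Fintype.card_fin]
    at h_s h_sc h_mixed
  simp only [hR1, hR2, s, mem_compl, mem_filter_univ, not_lt] at h_s h_sc h_mixed ⊢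
  simp_rw [div_mul_div_comm, ← sum_div]
  have hP : (Fintype.card (Perm (Fin (2 * n))) : ℝ) ≠ 0 := Nat.cast_ne_zero.2 Fintype.card_ne_zero
  have hn' : (n : ℝ) = N / 2 := by rw [hN]; push_cast; ring
  have hN3 : (6 : ℝ) ≤ N := by rw [hN]; exact_mod_cast (by omega : 6 ≤ 2 * n)
  have h0 : N ≠ 0 := by linarith
  have h1 : N - 1 ≠ 0 := by linarith
  have h2 : N - 2 ≠ 0 := by linarith
  have h3 : N - 3 ≠ 0 := by linarith
  rw [← hN, hn'] at h_s h_sc h_mixed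
  rw [eq_div_of_mul_eq (by positivity) ((mul_comm _ _).trans h_s),
    eq_div_of_mul_eq (by positivity) ((mul_comm _ _).trans h_sc),
    eq_div_of_mul_eq (by positivity) ((mul_comm _ _).trans h_mixed)]
  field_simp
  ring
end
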